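/- arXiv:2412.14363 — 2 statements merged into one kernel-verified Lean document; each statement's English description precedes it below -/
import Mathlib

section
/- Let n ≥ 2, let σ > 0, and let x ∈ ℝ^n be a random vector whose entries are i.i.d. N(0, σ²). Let N ≥ 2 be an integer and let Q_N be the symmetric N-bit quantizer, Q_N(x)_i = round(x_i/s)·s with scale s = (max_j |x_j|)/(2^{N−1} − 1). Then E‖x − Q_N(x)‖ ≤ (√(π·log n)/(2^{N−1} − 1)) · E‖x‖. -/
open MeasureTheory ProbabilityTheory

/-- Euclidean norm of a vector in `ℝ^n`. -/
noncomputable def euclNorm {m : Type*} [Fintype m] (v : m → ℝ) : ℝ :=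
  Real.sqrt (∑ i, v i ^ 2)

/-- Scale of the symmetric `N`-bit quantizer: `s = (max_j |x_j|) / (2^(N-1) - 1)`. -/
noncomputable def symScale (n N : ℕ) (x : Fin n → ℝ) : ℝ :=
  (⨆ j, |x j|) / (2 ^ (N - 1) - 1)

/-- Symmetric `N`-bit quantizer: `Q_N(x)_i = round(x_i / s) * s` (and `Q_N 0 = 0`). -/
noncomputable def symQuant (n N : ℕ) (x : Fin n → ℝ) : Fin n → ℝ :=
  if x = 0 then 0 else fun i => (round (x i / symScale n N x) : ℝ) * symScale n N x

/-!
Every coordinate of `x - Q_N(x)` is at most `s / 2` in absolute value, so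
`‖x - Q_N(x)‖ ≤ √n · max_j |x_j| / (2 (2^(N-1) - 1))`. Jensen's inequality for
`exp (t · max_j |x_j|) ≤ ∑_j (exp (t x_j) + exp (-t x_j))` bounds the expected maximum of `n`
sub-Gaussian variables of variance proxy `σ²` by `σ √(2 log 2n)`. In the other direction
`‖x‖ ≥ ‖x‖₁ / √n` and `E |x_j| = σ √(2/π)` give `E ‖x‖ ≥ √n σ √(2/π)`. The two estimates combine
because `log 2n ≤ 2 log n` for `n ≥ 2`; the `π` of the statement cancels the one in `E |x_j|`.
-/

open Real Set
open scoped NNReal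

lemma integral_Ioi_mul_exp_neg_mul_sq {b : ℝ} (hb : 0 < b) :
    ∫ x in Ioi (0 : ℝ), x * exp (-b * x ^ 2) = (2 * b)⁻¹ := by
  have h := integral_mul_cexp_neg_mul_sq (b := (b : ℂ)) (by simpa using hb)
  have hcast (x : ℝ) :
      (x : ℂ) * Complex.exp (-b * (x : ℂ) ^ 2) = ((x * exp (-b * x ^ 2) : ℝ) : ℂ) := by
    push_cast; ring
  simp_rw [hcast, integral_complex_ofReal] at h
  exact_mod_cast h

lemma integral_abs_gaussianReal {v : ℝ≥0} (hv : v ≠ 0) :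
    ∫ x, |x| ∂gaussianReal 0 v = √(2 * v / π) := by
  have hv' : (0 : ℝ) < v := by positivity
  have hpdf (x : ℝ) : gaussianPDFReal 0 v x • |x|
      = (√(2 * π * v))⁻¹ * (|x| * exp (-(2 * v : ℝ)⁻¹ * |x| ^ 2)) := by
    rw [gaussianPDFReal, smul_eq_mul, sq_abs, sub_zero]
    ring_nf
  rw [integral_gaussianReal_eq_integral_smul hv]
  simp_rw [hpdf]
  rw [integral_const_mul, integral_comp_abs (f := fun y => y * exp (-(2 * v : ℝ)⁻¹ * y ^ 2)),
    integral_Ioi_mul_exp_neg_mul_sq (by positivity)]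
  have hsq : 2 * (v : ℝ) / π = (2 * v) ^ 2 / (2 * π * v) := by field_simp
  rw [hsq, sqrt_div' _ (by positivity), sqrt_sq (by positivity)]
  field_simp

lemma hasSubgaussianMGF_of_map_eq_gaussianReal {Ω : Type*} {mΩ : MeasurableSpace Ω}
    {μ : Measure Ω} {X : Ω → ℝ} {v : ℝ≥0} (hX : μ.map X = gaussianReal 0 v) :
    HasSubgaussianMGF X v μ := by
  have hXm : AEMeasurable X μ := aemeasurable_of_map_neZero (by rw [hX]; infer_instance)
  rw [← HasSubgaussianMGF.id_map_iff hXm, hX]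
  exact ⟨integrable_exp_mul_gaussianReal, fun t => by simp [mgf_id_gaussianReal]⟩

lemma exp_mul_iSup_abs_le_sum {ι : Type*} [Fintype ι] [Nonempty ι] (x : ι → ℝ) (t : ℝ) :
    exp (t * ⨆ i, |x i|) ≤ ∑ i, (exp (t * x i) + exp (-t * x i)) := by
  obtain ⟨j, hj⟩ := exists_eq_ciSup_of_finite (f := fun i => |x i|)
  calc exp (t * ⨆ i, |x i|) = exp (t * |x j|) := by rw [← hj]
    _ ≤ exp (t * x j) + exp (-t * x j) := by
      rcases abs_cases (x j) with ⟨h, -⟩ | ⟨h, -⟩ <;> rw [h]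
      · exact le_add_of_nonneg_right (exp_pos _).le
      · rw [mul_neg, ← neg_mul]
        exact le_add_of_nonneg_left (exp_pos _).le
    _ ≤ _ := Finset.single_le_sum (f := fun i => exp (t * x i) + exp (-t * x i))
        (fun i _ => by positivity) (Finset.mem_univ j)

section MaximalInequality

variable {Ω ι : Type*} {mΩ : MeasurableSpace Ω} {μ : Measure Ω} [Fintype ι] [Nonempty ι]
  {X : ι → Ω → ℝ}

lemma integrable_iSup_abs (hX : ∀ i, Integrable (X i) μ) :
    Integrable (fun ω => ⨆ i, |X i ω|) μ := by
  refine (integrable_finsetSum Finset.univ fun i _ => (hX i).abs).mono'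
    (AEMeasurable.iSup fun i => (hX i).aemeasurable.abs).aestronglyMeasurable
    (ae_of_all _ fun ω => ?_)
  obtain ⟨j, hj⟩ := exists_eq_ciSup_of_finite (f := fun i => |X i ω|)
  rw [← hj, Real.norm_eq_abs, abs_abs]
  exact Finset.single_le_sum (f := fun i => |X i ω|) (fun i _ => abs_nonneg _)
    (Finset.mem_univ j)

variable [IsProbabilityMeasure μ] {c : ℝ≥0}

lemma mul_integral_iSup_abs_le_of_hasSubgaussianMGF (hX : ∀ i, HasSubgaussianMGF (X i) c μ)
    (t : ℝ) : t * ∫ ω, ⨆ i, |X i ω| ∂μ ≤ log (2 * Fintype.card ι) + c * t ^ 2 / 2 := by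
  have hexp i s : Integrable (fun ω => exp (s * X i ω)) μ := (hX i).integrable_exp_mul s
  have hsum : Integrable (fun ω => ∑ i, (exp (t * X i ω) + exp (-t * X i ω))) μ :=
    integrable_finsetSum _ fun i _ => (hexp i t).add (hexp i (-t))
  have hM := integrable_iSup_abs fun i => (hX i).integrable
  have hexpM : Integrable (fun ω => exp (t * ⨆ i, |X i ω|)) μ :=
    hsum.mono' (hM.aemeasurable.const_mul t).exp.aestronglyMeasurable
      (ae_of_all _ fun ω => by
        rw [norm_of_nonneg (exp_pos _).le]; exact exp_mul_iSup_abs_le_sum _ t)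
  have hjensen : exp (t * ∫ ω, ⨆ i, |X i ω| ∂μ) ≤ ∫ ω, exp (t * ⨆ i, |X i ω|) ∂μ := by
    rw [← integral_const_mul]
    exact convexOn_exp.map_integral_le continuous_exp.continuousOn isClosed_univ
      (ae_of_all _ fun _ => mem_univ _) (hM.const_mul t) hexpM
  have hunion :
      ∫ ω, exp (t * ⨆ i, |X i ω|) ∂μ ≤ exp (log (2 * Fintype.card ι) + c * t ^ 2 / 2) :=
    calc ∫ ω, exp (t * ⨆ i, |X i ω|) ∂μ
        ≤ ∫ ω, ∑ i, (exp (t * X i ω) + exp (-t * X i ω)) ∂μ :=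
          integral_mono hexpM hsum fun ω => exp_mul_iSup_abs_le_sum _ t
      _ = ∑ i, (mgf (X i) μ t + mgf (X i) μ (-t)) := by
          rw [integral_finsetSum (f := fun i ω => exp (t * X i ω) + exp (-t * X i ω)) _
            fun i _ => (hexp i t).add (hexp i (-t))]
          exact Finset.sum_congr rfl fun i _ => integral_add (hexp i t) (hexp i (-t))
      _ ≤ ∑ _i : ι, 2 * exp (c * t ^ 2 / 2) := by
          refine Finset.sum_le_sum fun i _ => ?_
          have := (hX i).mgf_le (-t)
          rw [neg_sq] at this
          linarith [(hX i).mgf_le t]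
      _ = exp (log (2 * Fintype.card ι) + c * t ^ 2 / 2) := by
          rw [exp_add, exp_log (by positivity), Finset.sum_const, Finset.card_univ, nsmul_eq_mul]
          ring
  exact exp_le_exp.mp (hjensen.trans hunion)

lemma integral_iSup_abs_le_of_hasSubgaussianMGF (hX : ∀ i, HasSubgaussianMGF (X i) c μ)
    (hc : c ≠ 0) : ∫ ω, ⨆ i, |X i ω| ∂μ ≤ √(2 * c * log (2 * Fintype.card ι)) := by
  set L := log (2 * Fintype.card ι)
  have hL : 0 < L := log_pos (by have := Fintype.card_pos (α := ι); norm_cast; omega)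
  have hc' : (0 : ℝ) < c := by positivity
  set s := √(2 * c * L)
  have hs : 0 < s := by positivity
  have hs2 : s ^ 2 = 2 * c * L := sq_sqrt (by positivity)
  -- `t = s / c` minimises `L / t + c t / 2`
  refine le_of_mul_le_mul_left ?_ (div_pos hs hc')
  calc s / c * ∫ ω, ⨆ i, |X i ω| ∂μ ≤ L + c * (s / c) ^ 2 / 2 :=
        mul_integral_iSup_abs_le_of_hasSubgaussianMGF hX _
    _ = s / c * s := by field_simp; rw [hs2]; ring

end MaximalInequality

section EuclNorm

variable {m : Type*} [Fintype m]

lemma euclNorm_nonneg (v : m → ℝ) : 0 ≤ euclNorm v := sqrt_nonneg _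

lemma euclNorm_le_sqrt_card_mul {v : m → ℝ} {a : ℝ} (ha : 0 ≤ a) (h : ∀ i, |v i| ≤ a) :
    euclNorm v ≤ √(Fintype.card m) * a := by
  rw [euclNorm, ← sqrt_sq ha, ← sqrt_mul (Nat.cast_nonneg _)]
  refine sqrt_le_sqrt ?_
  calc ∑ i, v i ^ 2 ≤ ∑ _i : m, a ^ 2 :=
        Finset.sum_le_sum fun i _ => sq_le_sq' (abs_le.mp (h i)).1 (abs_le.mp (h i)).2
    _ = Fintype.card m * a ^ 2 := by simp

lemma euclNorm_le_sqrt_card_mul_iSup_abs [Nonempty m] (v : m → ℝ) :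
    euclNorm v ≤ √(Fintype.card m) * ⨆ i, |v i| := by
  have hle i : |v i| ≤ ⨆ i, |v i| := le_ciSup (f := fun i => |v i|) (Finite.bddAbove_range _) i
  exact euclNorm_le_sqrt_card_mul ((abs_nonneg _).trans (hle (Classical.arbitrary m))) hle

lemma sum_abs_le_sqrt_card_mul_euclNorm (v : m → ℝ) :
    ∑ i, |v i| ≤ √(Fintype.card m) * euclNorm v := by
  rw [euclNorm, ← sqrt_mul (Nat.cast_nonneg _),
    ← sqrt_sq (Finset.sum_nonneg fun i _ => abs_nonneg (v i))]
  refine sqrt_le_sqrt ?_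
  simpa [sq_abs] using sq_sum_le_card_mul_sum_sq (s := Finset.univ) (f := fun i => |v i|)

end EuclNorm

lemma abs_sub_round_div_mul_le (x : ℝ) {s : ℝ} (hs : s ≠ 0) :
    |x - round (x / s) * s| ≤ |s| / 2 :=
  calc |x - round (x / s) * s| = |x / s - round (x / s)| * |s| := by
        rw [← abs_mul, sub_mul, div_mul_cancel₀ _ hs]
    _ ≤ 1 / 2 * |s| := mul_le_mul_of_nonneg_right (abs_sub_round _) (abs_nonneg _)
    _ = |s| / 2 := by ring

lemma euclNorm_sub_symQuant_le {n N : ℕ} (hN : 2 ≤ N) (v : Fin n → ℝ) :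
    euclNorm (v - symQuant n N v) ≤ √n / (2 * (2 ^ (N - 1) - 1)) * ⨆ j, |v j| := by
  by_cases hv : v = 0
  · simp [hv, symQuant, euclNorm]
  have hS : (0 : ℝ) < 2 ^ (N - 1) - 1 := sub_pos.2 (one_lt_pow₀ one_lt_two (by omega))
  obtain ⟨j, hj⟩ := Function.ne_iff.mp hv
  have hM : 0 < ⨆ j, |v j| :=
    (abs_pos.mpr hj).trans_le (le_ciSup (Finite.bddAbove_range (fun i => |v i|)) j)
  have hs : 0 < symScale n N v := div_pos hM hS
  have herr i : |(v - symQuant n N v) i| ≤ symScale n N v / 2 := by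
    simpa [symQuant, hv, abs_of_pos hs] using abs_sub_round_div_mul_le (v i) hs.ne'
  refine (euclNorm_le_sqrt_card_mul (by positivity) herr).trans_eq ?_
  rw [Fintype.card_fin, symScale]
  field_simp

lemma sqrt_card_mul_le_integral_euclNorm {Ω m : Type*} [Fintype m] [Nonempty m]
    {mΩ : MeasurableSpace Ω} {μ : Measure Ω} {x : Ω → m → ℝ} {v : ℝ≥0} (hv : v ≠ 0)
    (hx : ∀ i, μ.map (fun ω => x ω i) = gaussianReal 0 v) :
    √(Fintype.card m) * √(2 * v / π) ≤ ∫ ω, euclNorm (x ω) ∂μ := by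
  have hsub i := hasSubgaussianMGF_of_map_eq_gaussianReal (hx i)
  have hxm i : AEMeasurable (fun ω => x ω i) μ := (hsub i).aemeasurable
  have habs i : ∫ ω, |x ω i| ∂μ = √(2 * v / π) := by
    rw [← integral_abs_gaussianReal hv, ← hx i,
      integral_map (hxm i) continuous_abs.aestronglyMeasurable]
  have hnorm : Integrable (fun ω => euclNorm (x ω)) μ :=
    ((integrable_iSup_abs fun i => (hsub i).integrable).const_mul _).mono'
      (by unfold euclNorm; fun_prop)
      (ae_of_all _ fun ω => by
        rw [norm_of_nonneg (euclNorm_nonneg _)]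
        exact euclNorm_le_sqrt_card_mul_iSup_abs _)
  have hsum : ∫ ω, ∑ i, |x ω i| ∂μ ≤ √(Fintype.card m) * ∫ ω, euclNorm (x ω) ∂μ := by
    rw [← integral_const_mul]
    exact integral_mono (integrable_finsetSum _ fun i _ => (hsub i).integrable.abs)
      (hnorm.const_mul _) fun ω => sum_abs_le_sqrt_card_mul_euclNorm (x ω)
  rw [integral_finsetSum _ fun i _ => (hsub i).integrable.abs] at hsum
  simp only [habs, Finset.sum_const, Finset.card_univ, nsmul_eq_mul] at hsum
  have hcard : (0 : ℝ) < √(Fintype.card m) := sqrt_pos.2 (by simp [Fintype.card_pos])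
  refine le_of_mul_le_mul_left ?_ hcard
  rwa [← mul_assoc, mul_self_sqrt (Nat.cast_nonneg _)]

lemma sqrt_two_mul_log_two_mul_le {n : ℝ} (hn : 2 ≤ n) {c : ℝ} (hc : 0 ≤ c) :
    √(2 * c * log (2 * n)) ≤ 2 * (√(π * log n) * √(2 * c / π)) := by
  have hlog : log (2 * n) ≤ 2 * log n := by
    rw [log_mul two_ne_zero (by positivity)]
    linarith [log_le_log two_pos hn]
  have hlogn : 0 ≤ log n := log_nonneg (by linarith)
  rw [← sqrt_mul (by positivity), show π * log n * (2 * c / π) = 2 * c * log n by field_simp]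
  calc √(2 * c * log (2 * n)) ≤ √(2 ^ 2 * (2 * c * log n)) :=
        sqrt_le_sqrt (by nlinarith [mul_le_mul_of_nonneg_left hlog (by positivity : 0 ≤ 2 * c)])
    _ = 2 * √(2 * c * log n) := by rw [sqrt_mul (by positivity), sqrt_sq zero_le_two]

theorem stmt1_general {Ω : Type*} [MeasurableSpace Ω] (μ : Measure Ω) [IsProbabilityMeasure μ]
    (n : ℕ) (hn : 2 ≤ n) (σ : ℝ) (hσ : 0 < σ) (N : ℕ) (hN : 2 ≤ N)
    (x : Ω → Fin n → ℝ)
    (hgauss : ∀ i : Fin n,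
      Measure.map (fun ω => x ω i) μ = gaussianReal 0 (Real.toNNReal (σ ^ 2))) :
    (∫ ω, euclNorm (x ω - symQuant n N (x ω)) ∂μ)
      ≤ Real.sqrt (Real.pi * Real.log n) / (2 ^ (N - 1) - 1) *
        (∫ ω, euclNorm (x ω) ∂μ) := by
  have : Nonempty (Fin n) := ⟨⟨0, by omega⟩⟩
  have hv : (σ ^ 2).toNNReal ≠ 0 := by simpa using hσ.ne'
  have hS : (0 : ℝ) < 2 ^ (N - 1) - 1 := sub_pos.2 (one_lt_pow₀ one_lt_two (by omega))
  have hsub i := hasSubgaussianMGF_of_map_eq_gaussianReal (hgauss i)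
  have hmax := integral_iSup_abs_le_of_hasSubgaussianMGF hsub hv
  have hlow := sqrt_card_mul_le_integral_euclNorm hv hgauss
  have hlog := sqrt_two_mul_log_two_mul_le (n := n) (by exact_mod_cast hn)
    (c := (σ ^ 2).toNNReal) NNReal.zero_le_coe
  simp only [Fintype.card_fin] at hmax hlow
  have hquant : ∫ ω, euclNorm (x ω - symQuant n N (x ω)) ∂μ
      ≤ √n / (2 * (2 ^ (N - 1) - 1)) * ∫ ω, ⨆ j, |x ω j| ∂μ := by
    rw [← integral_const_mul]
    exact integral_mono_of_nonneg (ae_of_all _ fun ω => euclNorm_nonneg _)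
      ((integrable_iSup_abs fun i => (hsub i).integrable).const_mul _)
      (ae_of_all _ fun ω => euclNorm_sub_symQuant_le hN (x ω))
  calc ∫ ω, euclNorm (x ω - symQuant n N (x ω)) ∂μ
      ≤ √n / (2 * (2 ^ (N - 1) - 1)) * (2 * (√(π * log n) * √(2 * (σ ^ 2).toNNReal / π))) :=
        hquant.trans (mul_le_mul_of_nonneg_left (hmax.trans hlog) (by positivity))
    _ = √(π * log n) / (2 ^ (N - 1) - 1) * (√n * √(2 * (σ ^ 2).toNNReal / π)) := by
        field_simp
    _ ≤ _ := mul_le_mul_of_nonneg_left hlow (by positivity)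

/-- For a random vector with i.i.d. `N(0, σ²)` entries,
`E‖x - Q_N(x)‖ ≤ (√(π log n) / (2^(N-1) - 1)) · E‖x‖`. -/
theorem stmt1 {Ω : Type*} [MeasurableSpace Ω] (μ : Measure Ω) [IsProbabilityMeasure μ]
    (n : ℕ) (hn : 2 ≤ n) (σ : ℝ) (hσ : 0 < σ) (N : ℕ) (hN : 2 ≤ N)
    (x : Ω → Fin n → ℝ)
    (hindep : iIndepFun (fun i ω => x ω i) μ)
    (hgauss : ∀ i : Fin n,
      Measure.map (fun ω => x ω i) μ = gaussianReal 0 (Real.toNNReal (σ ^ 2))) :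
    (∫ ω, euclNorm (x ω - symQuant n N (x ω)) ∂μ)
      ≤ Real.sqrt (Real.pi * Real.log n) / (2 ^ (N - 1) - 1) *
        (∫ ω, euclNorm (x ω) ∂μ) :=
  stmt1_general μ n hn σ hσ N hN x hgauss
end

section
/- Let X ∈ ℝ^{n×d}, let 1 ≤ r ≤ d−r, and let L, H be integers with 2 ≤ L < H and 2 ≤ r. Define c_L = √(π·log(d−r))/(2^{L−1} − 1) and c_H = √(π·log r)/(2^{H−1} − 1), and for P_h ∈ ℝ^{d×r} with orthonormal columns define B(P_h) = c_L·‖X‖_F − (c_L − c_H)·‖X P_h‖_F. Then B(P_h) is minimized over all matrices with r orthonormal columns when the columns of P_h are orthonormal eigenvectors of Xᵀ X corresponding to its r largest eigenvalues; that is, the mixed-precision quantization error upper bound is minimized by the PCA choice of the high-precision subspace. -/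
open Matrix

/-- Frobenius norm of a real matrix. -/
noncomputable def frobNorm {m k : Type*} [Fintype m] [Fintype k] (A : Matrix m k ℝ) : ℝ :=
  Real.sqrt (∑ i, ∑ j, A i j ^ 2)

lemma frob_sq_trace {m k : Type*} [Fintype m] [Fintype k] (A : Matrix m k ℝ) :
    ∑ i, ∑ j, A i j ^ 2 = Matrix.trace (Aᵀ * A) := by
  simp only [Matrix.trace, Matrix.diag, Matrix.mul_apply, Matrix.transpose_apply, sq]
  exact Finset.sum_comm

set_option maxHeartbeats 1600000 in
/-- The mixed-precision quantization error upper bound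
`B(Pₕ) = c_L ‖X‖_F - (c_L - c_H) ‖X Pₕ‖_F` is minimized, over all `Pₕ` with `r`
orthonormal columns, by the PCA choice: `Pₕ` whose columns are orthonormal
eigenvectors of `Xᵀ X` for its `r` largest eigenvalues. -/
theorem stmt13 (n d r L H : ℕ) (hr1 : 1 ≤ r) (hr2 : 2 ≤ r) (hrd : r ≤ d - r)
    (hL : 2 ≤ L) (hLH : L < H)
    (X : Matrix (Fin n) (Fin d) ℝ)
    (lam : Fin d → ℝ) (hlam : Antitone lam)
    (v : Fin d → Fin d → ℝ)
    (hortho : ∀ i j, ∑ k, v i k * v j k = if i = j then (1 : ℝ) else 0)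
    (heig : ∀ i, (Xᵀ * X).mulVec (v i) = lam i • v i) :
    ∀ Ph : Matrix (Fin d) (Fin r) ℝ, Phᵀ * Ph = 1 →
      Real.sqrt (Real.pi * Real.log ((d - r : ℕ) : ℝ)) / (2 ^ (L - 1) - 1) * frobNorm X
          - (Real.sqrt (Real.pi * Real.log ((d - r : ℕ) : ℝ)) / (2 ^ (L - 1) - 1)
              - Real.sqrt (Real.pi * Real.log ((r : ℕ) : ℝ)) / (2 ^ (H - 1) - 1)) *
            frobNorm (X * Matrix.of (fun i (j : Fin r) =>
              v (Fin.castLE (hrd.trans (Nat.sub_le d r)) j) i))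
        ≤ Real.sqrt (Real.pi * Real.log ((d - r : ℕ) : ℝ)) / (2 ^ (L - 1) - 1) * frobNorm X
          - (Real.sqrt (Real.pi * Real.log ((d - r : ℕ) : ℝ)) / (2 ^ (L - 1) - 1)
              - Real.sqrt (Real.pi * Real.log ((r : ℕ) : ℝ)) / (2 ^ (H - 1) - 1)) *
            frobNorm (X * Ph) := by
  intro P hP
  have hrd' : r < d := by omega
  set e : Fin r → Fin d := Fin.castLE (hrd.trans (Nat.sub_le d r)) with he
  set Pstar : Matrix (Fin d) (Fin r) ℝ :=
    Matrix.of (fun i (j : Fin r) => v (e j) i) with hPstar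
  set V : Matrix (Fin d) (Fin d) ℝ := Matrix.of v with hV
  set D : Matrix (Fin d) (Fin d) ℝ := Matrix.diagonal lam with hD
  have hVVt : V * Vᵀ = 1 := by
    ext i j
    simpa [hV, Matrix.mul_apply, Matrix.one_apply] using hortho i j
  have hVtV : Vᵀ * V = 1 := mul_eq_one_comm.mp hVVt
  have hMVt : (Xᵀ * X) * Vᵀ = Vᵀ * D := by
    ext k i
    have h := congrFun (heig i) k
    simp only [Matrix.mulVec, dotProduct, Pi.smul_apply, smul_eq_mul,
      Matrix.mul_apply, Matrix.transpose_apply] at h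
    simp only [hV, hD, Matrix.mul_apply, Matrix.transpose_apply, Matrix.of_apply,
      Matrix.diagonal_apply, Finset.sum_ite_eq, Finset.mem_univ, if_true, mul_ite, mul_zero]
    rw [Finset.sum_ite_eq' Finset.univ i (fun j => v j k * lam j)]
    simp only [Finset.mem_univ, if_true]
    linarith [h]
  -- the eigen-coordinate matrix
  set C : Matrix (Fin d) (Fin r) ℝ := V * P with hC
  have hPVC : P = Vᵀ * C := by
    rw [hC, ← Matrix.mul_assoc, hVtV, Matrix.one_mul]
  have hCtC : Cᵀ * C = 1 := by
    rw [hC, Matrix.transpose_mul, Matrix.mul_assoc, ← Matrix.mul_assoc Vᵀ, hVtV,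
      Matrix.one_mul, hP]
  have hKey : Pᵀ * (Xᵀ * X) * P = Cᵀ * D * C := by
    calc Pᵀ * (Xᵀ * X) * P
        = Cᵀ * (V * ((Xᵀ * X) * Vᵀ)) * C := by
          rw [hPVC]
          simp only [Matrix.transpose_mul, Matrix.transpose_transpose, Matrix.mul_assoc]
      _ = Cᵀ * (V * (Vᵀ * D)) * C := by rw [hMVt]
      _ = Cᵀ * D * C := by rw [← Matrix.mul_assoc V, hVVt, Matrix.one_mul]
  set t : Fin d → ℝ := fun i => ∑ j, C i j ^ 2 with ht
  have ht_nonneg : ∀ i, 0 ≤ t i := fun i => Finset.sum_nonneg fun j _ => sq_nonneg _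
  -- t i ≤ 1 via the projector Q = C Cᵀ
  set Q : Matrix (Fin d) (Fin d) ℝ := C * Cᵀ with hQ
  have hQidem : Q * Q = Q := by
    rw [hQ, Matrix.mul_assoc, ← Matrix.mul_assoc Cᵀ, hCtC, Matrix.one_mul]
  have hQsymm : Qᵀ = Q := by
    rw [hQ, Matrix.transpose_mul, Matrix.transpose_transpose]
  have hQdiag : ∀ i, Q i i = t i := by
    intro i
    simp [hQ, Matrix.mul_apply, ht, sq]
  have ht_le_one : ∀ i, t i ≤ 1 := by
    intro i
    have h1 : Q i i = ∑ k, Q i k ^ 2 := by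
      conv_lhs => rw [← hQidem]
      rw [Matrix.mul_apply]
      refine Finset.sum_congr rfl fun k _ => ?_
      have h4 := congrFun (congrFun hQsymm i) k
      rw [Matrix.transpose_apply] at h4
      rw [h4, sq]
    have h2 : Q i i ^ 2 ≤ ∑ k, Q i k ^ 2 :=
      Finset.single_le_sum (f := fun k => Q i k ^ 2) (fun k _ => sq_nonneg _)
        (Finset.mem_univ i)
    have h3 := hQdiag i
    nlinarith [ht_nonneg i]
  have hsum_t : ∑ i, t i = (r : ℝ) := by
    have := frob_sq_trace C
    rw [hCtC] at this
    simpa [ht, Matrix.trace_one] using this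
  -- trace formula
  have htr : Matrix.trace (Cᵀ * D * C) = ∑ i, lam i * t i := by
    have hDC : ∀ i j, (D * C) i j = lam i * C i j := fun i j => by
      rw [hD]; exact Matrix.diagonal_mul lam C i j
    rw [Matrix.mul_assoc]
    simp only [Matrix.trace, Matrix.diag]
    calc ∑ jj, (Cᵀ * (D * C)) jj jj
        = ∑ jj, ∑ i, C i jj * (lam i * C i jj) := by
          refine Finset.sum_congr rfl fun jj _ => ?_
          rw [Matrix.mul_apply]
          exact Finset.sum_congr rfl fun i _ => by rw [Matrix.transpose_apply, hDC]
      _ = ∑ i, lam i * t i := by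
          rw [Finset.sum_comm]
          refine Finset.sum_congr rfl fun i _ => ?_
          simp only [ht, Finset.mul_sum]
          exact Finset.sum_congr rfl fun jj _ => by ring
  -- value at the PCA choice
  have hstar : ∑ i, ∑ j, (X * Pstar) i j ^ 2 = ∑ j : Fin r, lam (e j) := by
    rw [frob_sq_trace]
    have hT : (X * Pstar)ᵀ * (X * Pstar) = Pstarᵀ * ((Xᵀ * X) * Pstar) := by
      simp only [Matrix.transpose_mul, Matrix.mul_assoc]
    rw [hT]
    simp only [Matrix.trace, Matrix.diag]
    refine Finset.sum_congr rfl fun j _ => ?_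
    have hMP : ∀ k, ((Xᵀ * X) * Pstar) k j = lam (e j) * v (e j) k := by
      intro k
      have h := congrFun (heig (e j)) k
      simp only [Matrix.mulVec, dotProduct, Pi.smul_apply, smul_eq_mul] at h
      rw [Matrix.mul_apply]
      simpa [hPstar] using h
    rw [Matrix.mul_apply]
    calc ∑ k, Pstarᵀ j k * ((Xᵀ * X) * Pstar) k j
        = lam (e j) * ∑ k, v (e j) k * v (e j) k := by
          rw [Finset.mul_sum]
          refine Finset.sum_congr rfl fun k _ => ?_
          rw [hMP k, Matrix.transpose_apply]
          simp only [hPstar, Matrix.of_apply]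
          ring
      _ = lam (e j) := by rw [hortho]; simp
  -- the selection vector s
  set R : Fin d := ⟨r, hrd'⟩ with hR
  set s : Fin d → ℝ := fun i => if (i : ℕ) < r then 1 else 0 with hs
  have hsum_s : ∑ i, s i = (r : ℝ) := by
    rw [Fin.sum_univ_eq_sum_range (fun m => if m < r then (1 : ℝ) else 0)]
    rw [← Finset.sum_subset (Finset.range_subset_range.2 hrd'.le)
      (fun x _ hx => if_neg (by simpa using hx))]
    rw [Finset.sum_congr rfl (fun x hx => if_pos (Finset.mem_range.mp hx))]
    simp
  have hsEq : ∑ j : Fin r, lam (e j) = ∑ i, lam i * s i := by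
    have hgoal : ∑ i, lam i * s i
        = ∑ m ∈ Finset.range d, (fun m => if hm : m < d then
            (if m < r then lam ⟨m, hm⟩ else 0) else 0) m := by
      rw [← Fin.sum_univ_eq_sum_range]
      refine Finset.sum_congr rfl fun i _ => ?_
      simp only [hs, Fin.is_lt, dif_pos, Fin.eta, mul_ite, mul_one, mul_zero]
    rw [hgoal, ← Finset.sum_subset (Finset.range_subset_range.2 hrd'.le)
      (fun x hx hxr => by
        have : ¬ x < r := by simpa using hxr
        simp [this])]
    rw [← Fin.sum_univ_eq_sum_range (fun m => if hm : m < d then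
      (if m < r then lam ⟨m, hm⟩ else 0) else 0) r]
    refine Finset.sum_congr rfl fun j _ => ?_
    have hjd : (j : ℕ) < d := lt_of_lt_of_le j.isLt (by omega)
    have hjr : (j : ℕ) < r := j.isLt
    simp only [hjd, dif_pos, hjr, if_pos]
    congr 1
  -- the main comparison
  have hmain : ∑ i, lam i * t i ≤ ∑ i, lam i * s i := by
    have hpt : ∀ i ∈ Finset.univ, lam i * t i ≤ lam i * s i + lam R * (t i - s i) := by
      intro i _
      by_cases h : (i : ℕ) < r
      · have hle : lam R ≤ lam i := hlam (by rw [Fin.le_def]; simpa [hR] using h.le)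
        have h1 := ht_le_one i
        simp only [hs, if_pos h]
        nlinarith
      · have hle : lam i ≤ lam R := hlam (by rw [Fin.le_def]; simpa [hR] using not_lt.mp h)
        have h0 := ht_nonneg i
        simp only [hs, if_neg h]
        nlinarith
    calc ∑ i, lam i * t i ≤ ∑ i, (lam i * s i + lam R * (t i - s i)) :=
          Finset.sum_le_sum hpt
      _ = ∑ i, lam i * s i + lam R * (∑ i, t i - ∑ i, s i) := by
          rw [Finset.sum_add_distrib, ← Finset.mul_sum, Finset.sum_sub_distrib]
      _ = ∑ i, lam i * s i := by rw [hsum_t, hsum_s, sub_self, mul_zero, add_zero]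
  -- Frobenius norm comparison
  have hfrobsq : ∑ i, ∑ j, (X * P) i j ^ 2 ≤ ∑ i, ∑ j, (X * Pstar) i j ^ 2 := by
    rw [hstar, frob_sq_trace]
    have hT : (X * P)ᵀ * (X * P) = Pᵀ * (Xᵀ * X) * P := by
      simp only [Matrix.transpose_mul, Matrix.mul_assoc]
    rw [hT, hKey, htr, hsEq]
    exact hmain
  have hfrob : frobNorm (X * P) ≤ frobNorm (X * Pstar) :=
    Real.sqrt_le_sqrt hfrobsq
  -- coefficient nonnegativity
  have hdenL : (0 : ℝ) < 2 ^ (L - 1) - 1 := by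
    have : (1 : ℝ) < 2 ^ (L - 1) := one_lt_pow₀ one_lt_two (by omega)
    linarith
  have hdenH : (0 : ℝ) < 2 ^ (H - 1) - 1 := by
    have : (1 : ℝ) < 2 ^ (H - 1) := one_lt_pow₀ one_lt_two (by omega)
    linarith
  have hdenLE : (2 : ℝ) ^ (L - 1) - 1 ≤ 2 ^ (H - 1) - 1 := by
    have : (2 : ℝ) ^ (L - 1) ≤ 2 ^ (H - 1) := pow_le_pow_right₀ one_le_two (by omega)
    linarith
  have hnum : Real.sqrt (Real.pi * Real.log ((r : ℕ) : ℝ))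
      ≤ Real.sqrt (Real.pi * Real.log ((d - r : ℕ) : ℝ)) := by
    apply Real.sqrt_le_sqrt
    apply mul_le_mul_of_nonneg_left _ Real.pi_nonneg
    have h0 : (0 : ℝ) < ((r : ℕ) : ℝ) := by exact_mod_cast hr1
    have hc : ((r : ℕ) : ℝ) ≤ ((d - r : ℕ) : ℝ) := Nat.cast_le.mpr hrd
    exact Real.log_le_log h0 hc
  have hΔ : 0 ≤ Real.sqrt (Real.pi * Real.log ((d - r : ℕ) : ℝ)) / (2 ^ (L - 1) - 1)
      - Real.sqrt (Real.pi * Real.log ((r : ℕ) : ℝ)) / (2 ^ (H - 1) - 1) := by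
    have := div_le_div₀ (Real.sqrt_nonneg _) hnum hdenL hdenLE
    linarith
  have := mul_le_mul_of_nonneg_left hfrob hΔ
  linarith
end
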